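/- arXiv:1505.00770 — 4 statements merged into one kernel-verified Lean document; each statement's English description precedes it below -/
import Mathlib

section
/- Let Δ : A → A be a weak-2-local derivation on a unital C*-algebra A. Then for each projection p ∈ A, each a ∈ A, and each λ ∈ ℂ, one has Δ(a + λp) = Δ(a - λ(1-p)). -/
variable {A : Type*} [NormedRing A] [StarRing A] [CStarRing A] [NormedAlgebra ℂ A]
  [CompleteSpace A] [StarModule ℂ A]

/-- A (bounded linear) derivation on `A`. -/
def IsDerivationCLM (D : A →L[ℂ] A) : Prop := ∀ x y, D (x * y) = D x * y + x * D y

/-- A (non-necessarily linear) weak-2-local derivation on the C*-algebra `A`. -/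
def IsWeak2LocalDerivation (Δ : A → A) : Prop :=
  ∀ a b : A, ∀ φ : A →L[ℂ] ℂ, ∃ D : A →L[ℂ] A,
    IsDerivationCLM D ∧ φ (Δ a) = φ (D a) ∧ φ (Δ b) = φ (D b)

theorem IsDerivationCLM.map_one {D : A →L[ℂ] A} (hD : IsDerivationCLM D) : D 1 = 0 := by
  have h := hD 1 1
  simp only [one_mul, mul_one] at h
  exact left_eq_add.mp h

theorem IsWeak2LocalDerivation.eq_of_forall_derivation {Δ : A → A}
    (hΔ : IsWeak2LocalDerivation Δ) {x y : A}
    (hxy : ∀ D : A →L[ℂ] A, IsDerivationCLM D → D x = D y) : Δ x = Δ y := by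
  by_contra hne
  obtain ⟨φ, hφ⟩ := SeparatingDual.exists_separating_of_ne (R := ℂ) hne
  obtain ⟨D, hD, hx, hy⟩ := hΔ x y φ
  exact hφ (by rw [hx, hy, hxy D hD])

theorem IsWeak2LocalDerivation.map_add_smul_one {Δ : A → A} (hΔ : IsWeak2LocalDerivation Δ)
    (x : A) (μ : ℂ) : Δ (x + μ • 1) = Δ x :=
  hΔ.eq_of_forall_derivation fun D hD => by rw [map_add, map_smul, hD.map_one, smul_zero, add_zero]

theorem weak2local_add_smul_proj_general (Δ : A → A) (hΔ : IsWeak2LocalDerivation Δ)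
    (p : A) (a : A) (lam : ℂ) :
    Δ (a + lam • p) = Δ (a - lam • (1 - p)) := by
  have hsplit : a + lam • p = (a - lam • (1 - p)) + lam • (1 : A) := by
    rw [smul_sub]; abel
  rw [hsplit, hΔ.map_add_smul_one]

/-- For a weak-2-local derivation `Δ` on a unital C*-algebra `A`, every projection `p`,
every `a ∈ A` and every `λ ∈ ℂ`, one has `Δ(a + λp) = Δ(a - λ(1-p))`. -/
theorem weak2local_add_smul_proj (Δ : A → A) (hΔ : IsWeak2LocalDerivation Δ)
    (p : A) (hp : IsIdempotentElem p) (hps : star p = p) (a : A) (lam : ℂ) :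
    Δ (a + lam • p) = Δ (a - lam • (1 - p)) :=
  weak2local_add_smul_proj_general Δ hΔ p a lam
end

section
/- In M_n(ℂ) with standard matrix units, for indices 1 ≤ l,k ≤ n with l ≠ k, let φ = φ_{ln} + φ_{kn}, where φ_{ij} is the functional picking out the (i,j) entry. Then φ([z, p_k a q]) = φ([z, e_{lk} a q]) for all z, a ∈ M_n(ℂ), where q = 1 - p_n and p_k = e_{kk}. -/
/-!
Right multiplication by `q = 1 - e_{NN}` kills column `N`, so for every `x` the
entry `([z, x q])_{iN}` reduces to `-(x q z)_{iN}`. With `y = a q z` this gives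
`φ([z, e_{ik} a q]) = -(e_{ik} y)_{lN} - (e_{ik} y)_{kN}`, and since `l ≠ k` both
`i = k` and `i = l` leave exactly one surviving term, `-y_{kN}`.
-/

open Matrix

/-- The matrix unit `e i j` in `Mₙ(ℂ)`. -/
noncomputable def matrixUnit {n : ℕ} (i j : Fin n) : Matrix (Fin n) (Fin n) ℂ :=
  Matrix.single i j 1

namespace Matrix

variable {m R : Type*} [Fintype m] [DecidableEq m] [Ring R]

theorem mul_one_sub_single_apply_self (M : Matrix m m R) (i j : m) :
    (M * (1 - single j j 1) : Matrix m m R) i j = 0 := by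
  rw [Matrix.mul_sub, Matrix.mul_one, sub_apply, mul_single_apply_same, mul_one, sub_self]

theorem commutator_mul_one_sub_single_apply_self (z x : Matrix m m R) (i j : m) :
    (z * (x * (1 - single j j 1)) - x * (1 - single j j 1) * z : Matrix m m R) i j =
      -(x * (1 - single j j 1) * z : Matrix m m R) i j := by
  rw [sub_apply, ← Matrix.mul_assoc, mul_one_sub_single_apply_self, zero_sub]

end Matrix

/-- In `M_{n+1}(ℂ)`, with `p_k = e_{kk}`, `q = 1 - p_n` (where `n` denotes the last index),
and `φ = φ_{ln} + φ_{kn}` for `l ≠ k` (where `φ_{ij}` picks out the `(i,j)` entry), one has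
`φ([z, p_k a q]) = φ([z, e_{lk} a q])` for all `z, a`. -/
theorem phi_commutator_pk_aq_eq_elk_aq {n : ℕ} (l k : Fin (n + 1)) (hlk : l ≠ k)
    (z a : Matrix (Fin (n + 1)) (Fin (n + 1)) ℂ) :
    letI N : Fin (n + 1) := Fin.last n
    letI q : Matrix (Fin (n + 1)) (Fin (n + 1)) ℂ := 1 - matrixUnit N N
    letI φ : Matrix (Fin (n + 1)) (Fin (n + 1)) ℂ → ℂ := fun x => x l N + x k N
    φ (z * (matrixUnit k k * a * q) - (matrixUnit k k * a * q) * z) =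
      φ (z * (matrixUnit l k * a * q) - (matrixUnit l k * a * q) * z) := by
  set N := Fin.last n
  set y := a * (1 - single N N 1) * z
  have h_reduce : ∀ i r : Fin (n + 1),
      (z * (matrixUnit i k * a * (1 - matrixUnit N N)) -
          matrixUnit i k * a * (1 - matrixUnit N N) * z) r N =
        -(single i k 1 * y : Matrix _ _ ℂ) r N := by
    intro i r
    simp only [matrixUnit]
    rw [commutator_mul_one_sub_single_apply_self, Matrix.mul_assoc, Matrix.mul_assoc,
      ← Matrix.mul_assoc a]
  show _ + _ = _ + _
  rw [h_reduce, h_reduce, h_reduce, h_reduce, single_mul_apply_same, single_mul_apply_same,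
    single_mul_apply_of_ne (h := hlk), single_mul_apply_of_ne (h := hlk.symm)]
  ring
end

section
/- In M_n(ℂ), let R ⊆ {1,...,n}, set r = Σ_{i∈R} p_i (r = 0 if R is empty), and fix k ∉ R. Let φ = φ_{k1} + φ_{kn}. Then φ([z, r a p_n]) = φ([z, r a e_{n1}]) for all z, a ∈ M_n(ℂ). -/
open Matrix Finset

/-
Row `k` of `r = ∑_{i∈R} p_i` vanishes since `k ∉ R`, hence so does row `k` of `b e_{Nc}` with
`b = r a`, and `φ` only reads row `k`. Thus `φ([z, b e_{Nc}]) = φ(z b e_{Nc})`, and `z b e_{Nc}`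
is `(z b)_{kN}` placed in column `c` of row `k`. For `c = N` and `c = 0` this gives `φ`-value
`(z b)_{kN} (1 + [N = 0])` either way.
-/

namespace Matrix

variable {m α : Type*}

theorem sum_single_diag_apply_of_notMem [DecidableEq m] [NonUnitalNonAssocSemiring α]
    {R : Finset m} {k : m} (hk : k ∉ R) (c : α) (j : m) :
    (∑ i ∈ R, single i i c) k j = 0 := by
  rw [sum_apply]
  exact sum_eq_zero fun i hi => single_apply_of_row_ne (ne_of_mem_of_not_mem hi hk) _ _ _

theorem mul_apply_of_row_eq_zero [Fintype m] [NonUnitalNonAssocSemiring α]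
    {b : Matrix m m α} {k : m} (hb : ∀ j, b k j = 0) (a : Matrix m m α) (j : m) :
    (b * a) k j = 0 := by
  simp [mul_apply, hb]

theorem mul_single_apply [Fintype m] [DecidableEq m] [NonUnitalNonAssocSemiring α]
    (b : Matrix m m α) (i c : m) (x : α) (k j : m) :
    (b * single i c x) k j = if j = c then b k i * x else 0 := by
  split_ifs with h
  · subst h
    simp
  · exact mul_single_apply_of_ne _ _ _ _ _ h b

theorem commutator_mul_single_apply_of_row_eq_zero [Fintype m] [DecidableEq m] [Ring α]
    {b : Matrix m m α} {k : m} (hb : ∀ j, b k j = 0) (z : Matrix m m α) (i c : m) (x : α)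
    (j : m) : (z * (b * single i c x) - b * single i c x * z : Matrix m m α) k j =
      if j = c then (z * b) k i * x else 0 := by
  have hrow : ∀ j, (b * single i c x) k j = 0 := mul_apply_of_row_eq_zero hb _
  rw [sub_apply, mul_apply_of_row_eq_zero hrow, sub_zero, ← mul_assoc, mul_single_apply]

end Matrix

/-- In `M_{n+1}(ℂ)`, for `R ⊆ {1,…,n+1}`, `r = ∑_{i∈R} p_i`, `k ∉ R`, and
`φ = φ_{k1} + φ_{kn}` (entry functionals at the first and last columns), one has
`φ([z, r a p_n]) = φ([z, r a e_{n1}])` for all `z, a`. -/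
theorem phi_commutator_r_a_pn_eq_r_a_en1 {n : ℕ} (R : Finset (Fin (n + 1)))
    (k : Fin (n + 1)) (hk : k ∉ R) (z a : Matrix (Fin (n + 1)) (Fin (n + 1)) ℂ) :
    letI N : Fin (n + 1) := Fin.last n
    letI r : Matrix (Fin (n + 1)) (Fin (n + 1)) ℂ := ∑ i ∈ R, matrixUnit i i
    letI φ : Matrix (Fin (n + 1)) (Fin (n + 1)) ℂ → ℂ := fun x => x k 0 + x k N
    φ (z * (r * a * matrixUnit N N) - (r * a * matrixUnit N N) * z) =
      φ (z * (r * a * matrixUnit N 0) - (r * a * matrixUnit N 0) * z) := by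
  have hra : ∀ j, ((∑ i ∈ R, matrixUnit i i) * a) k j = 0 :=
    mul_apply_of_row_eq_zero (sum_single_diag_apply_of_notMem hk 1) a
  beta_reduce
  simp only [matrixUnit] at hra ⊢
  simp only [commutator_mul_single_apply_of_row_eq_zero hra, mul_one, if_true,
    eq_comm (a := Fin.last n)]
  ring
end

section
/- Let H be a complex Hilbert space and Δ : K(H) → K(H) a weak-2-local *-derivation. Then Δ is a quasi-linear operator on K(H): its restriction to the C*-subalgebra generated by each self-adjoint element is linear, and Δ(a + ib) = Δ(a) + iΔ(b) whenever a, b are self-adjoint. -/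
/-
Testing against functionals reduces everything to scalars. For `φ` arbitrary, `Δ` agrees with one
linear `D` at both `z` and `λ z`, so `Δ` is homogeneous. For self-adjoint `a, b` and a symmetric
`φ` (`φ (z⋆) = conj (φ z)`), the `⋆`-derivations matching `Δ` at `(a + i b, a)` and at
`(a + i b, b)` take real values at `a` and `b`, so comparing imaginary parts gives
`φ Δ(a + i b) = φ Δ a + i φ Δ b`; symmetric functionals separate points. Since
`(s + t) + i (s - t) = (1 + i) (s - i t)`, homogeneity and this identity decompose
`Δ ((s + t) + i (s - t))` in two ways into self-adjoint parts (`Δ` preserves self-adjointness),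
whence `Δ (s + t) = Δ s + Δ t` for self-adjoint `s, t`; so `Δ` is in fact linear.
What is specific to `K(H)` is only that it is closed under adjoints (Schauder's theorem).
-/

variable (H : Type*) [NormedAddCommGroup H] [InnerProductSpace ℂ H] [CompleteSpace H]

/-- The C*-algebra `K(H)` of compact operators on `H`. -/
noncomputable def compactOps : NonUnitalSubalgebra ℂ (H →L[ℂ] H) where
  carrier := {T | IsCompactOperator T}
  zero_mem' := isCompactOperator_zero
  add_mem' := fun hf hg => hf.add hg
  smul_mem' := fun c T hT => hT.smul c
  mul_mem' := fun {_ g} hf _ => hf.comp_clm g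

/-- A (non-necessarily linear) weak-2-local `*`-derivation on `K(H)`: for all `a, b` and
every continuous functional `φ` there is a bounded linear `*`-derivation `D` (a derivation
commuting with the adjoint operation, expressed on the underlying operators) with
`φΔ(a) = φD(a)` and `φΔ(b) = φD(b)`. -/
def IsWeak2LocalStarDerivation
    {H : Type*} [NormedAddCommGroup H] [InnerProductSpace ℂ H] [CompleteSpace H]
    (Δ : compactOps H → compactOps H) : Prop :=
  ∀ a b : compactOps H, ∀ φ : compactOps H →L[ℂ] ℂ,
    ∃ D : compactOps H →L[ℂ] compactOps H,
      (∀ x y : compactOps H, D (x * y) = D x * y + x * D y) ∧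
      (∀ x y : compactOps H, ((y : H →L[ℂ] H) = star (x : H →L[ℂ] H)) →
        ((D y : H →L[ℂ] H) = star ((D x : H →L[ℂ] H)))) ∧
      φ (Δ a) = φ (D a) ∧ φ (Δ b) = φ (D b)

open Complex ComplexStarModule

section StarModule

variable {A : Type*} [AddCommGroup A] [Module ℂ A] [StarAddMonoid A] [StarModule ℂ A]
  {p q : A}

lemma realPart_add_I_smul (hp : IsSelfAdjoint p) (hq : IsSelfAdjoint q) :
    (ℜ (p + I • q) : A) = p := by
  simp [hp.coe_realPart, hq.imaginaryPart]

lemma imaginaryPart_add_I_smul (hp : IsSelfAdjoint p) (hq : IsSelfAdjoint q) :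
    (ℑ (p + I • q) : A) = q := by
  simp [hp.imaginaryPart, hq.coe_realPart]

end StarModule

section SymmetricDual

variable {A : Type*} [AddCommGroup A] [Module ℂ A] [TopologicalSpace A] [StarAddMonoid A]

lemma IsSelfAdjoint.dual_apply_of_star_comm {φ : StrongDual ℂ A}
    (hφ : ∀ z, φ (star z) = star (φ z)) {f : A → A} (hf : ∀ x, f (star x) = star (f x)) {x : A}
    (hx : IsSelfAdjoint x) : IsSelfAdjoint (φ (f x)) := by
  rw [IsSelfAdjoint, ← hφ, ← hf, hx.star_eq]

variable [StarModule ℂ A] [ContinuousStar A]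

noncomputable def starDual (φ : StrongDual ℂ A) : StrongDual ℂ A :=
  ((starL ℂ : ℂ ≃L⋆[ℂ] ℂ) : ℂ →L⋆[ℂ] ℂ).comp (φ.comp ((starL ℂ : A ≃L⋆[ℂ] A) : A →L⋆[ℂ] A))

@[simp] lemma starDual_apply (φ : StrongDual ℂ A) (z : A) : starDual φ z = star (φ (star z)) :=
  rfl

theorem eq_of_forall_symmetric_dual_eq [SeparatingDual ℂ A] {v w : A}
    (h : ∀ φ : StrongDual ℂ A, (∀ z, φ (star z) = star (φ z)) → φ v = φ w) : v = w := by
  refine (SeparatingDual.eq_iff_forall_dual_eq (R := ℂ)).2 fun φ ↦ ?_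
  have h₁ := h (φ + starDual φ) fun z ↦ by simp [add_comm]
  have h₂ := h (I • (φ - starDual φ)) fun z ↦ by simp [mul_sub]; ring
  simp only [add_apply, smul_apply, sub_apply, smul_eq_mul] at h₁ h₂
  linear_combination (h₁ - I * h₂) / 2 + (φ v - starDual φ v - φ w + starDual φ w) / 2 * I_sq

end SymmetricDual

def IsWeak2Local {R A : Type*} [Ring R] [TopologicalSpace R] [AddCommGroup A] [Module R A]
    [TopologicalSpace A] (𝒟 : Set (A →L[R] A)) (Δ : A → A) : Prop :=
  ∀ a b : A, ∀ φ : StrongDual R A, ∃ D ∈ 𝒟, φ (Δ a) = φ (D a) ∧ φ (Δ b) = φ (D b)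

namespace IsWeak2Local

section Homogeneous

variable {R A : Type*} [Ring R] [TopologicalSpace R] [AddCommGroup A] [Module R A]
  [TopologicalSpace A] [SeparatingDual R A] {𝒟 : Set (A →L[R] A)} {Δ : A → A}

theorem map_smul (hΔ : IsWeak2Local 𝒟 Δ) (c : R) (z : A) : Δ (c • z) = c • Δ z := by
  refine (SeparatingDual.eq_iff_forall_dual_eq (R := R)).2 fun φ ↦ ?_
  obtain ⟨D, -, hz, hcz⟩ := hΔ z (c • z) φ
  rw [hcz, _root_.map_smul, _root_.map_smul, _root_.map_smul, hz]

theorem map_neg (hΔ : IsWeak2Local 𝒟 Δ) (z : A) : Δ (-z) = -Δ z := by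
  simpa using hΔ.map_smul (-1) z

end Homogeneous

variable {A : Type*} [AddCommGroup A] [Module ℂ A] [TopologicalSpace A] [StarAddMonoid A]
  [StarModule ℂ A] [ContinuousStar A] [SeparatingDual ℂ A]
  {𝒟 : Set (A →L[ℂ] A)} {Δ : A → A}

variable (hΔ : IsWeak2Local 𝒟 Δ) (h𝒟 : 𝒟 ⊆ {D | ∀ x, D (star x) = star (D x)})
include hΔ h𝒟

theorem isSelfAdjoint_apply {a : A} (ha : IsSelfAdjoint a) : IsSelfAdjoint (Δ a) := by
  refine eq_of_forall_symmetric_dual_eq fun φ hφ ↦ ?_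
  obtain ⟨D, hD, h, -⟩ := hΔ a a φ
  rw [hφ, h]
  exact ha.dual_apply_of_star_comm hφ (h𝒟 hD)

theorem map_add_I_smul {a b : A} (ha : IsSelfAdjoint a) (hb : IsSelfAdjoint b) :
    Δ (a + I • b) = Δ a + I • Δ b := by
  refine eq_of_forall_symmetric_dual_eq fun φ hφ ↦ ?_
  obtain ⟨D₁, hD₁, h₁, ha₁⟩ := hΔ (a + I • b) a φ
  obtain ⟨D₂, hD₂, h₂, hb₂⟩ := hΔ (a + I • b) b φ
  have expand (D : A →L[ℂ] A) : φ (D (a + I • b)) = φ (D a) + I • φ (D b) := by simp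
  have sa {D} (hD : D ∈ 𝒟) {x} (hx : IsSelfAdjoint x) : IsSelfAdjoint (φ (D x)) :=
    hx.dual_apply_of_star_comm hφ (h𝒟 hD)
  have hb₁₂ : φ (D₁ b) = φ (D₂ b) := by
    have h := congrArg (fun z : ℂ ↦ (ℑ z : ℂ)) (h₁.symm.trans h₂)
    simpa only [expand, imaginaryPart_add_I_smul (sa hD₁ ha) (sa hD₁ hb),
      imaginaryPart_add_I_smul (sa hD₂ ha) (sa hD₂ hb)] using h
  rw [_root_.map_add, _root_.map_smul, h₁, expand, ← ha₁, hb₁₂, ← hb₂]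

theorem map_add_of_isSelfAdjoint {s t : A} (hs : IsSelfAdjoint s) (ht : IsSelfAdjoint t) :
    Δ (s + t) = Δ s + Δ t := by
  have rotate : (s + t) + I • (s - t) = (1 + I) • (s + I • -t) := by
    match_scalars <;> simp [Complex.ext_iff]
  have key : Δ (s + t) + I • Δ (s - t) = (Δ s + Δ t) + I • (Δ s - Δ t) := by
    rw [← hΔ.map_add_I_smul h𝒟 (hs.add ht) (hs.sub ht), rotate, hΔ.map_smul,
      hΔ.map_add_I_smul h𝒟 hs ht.neg, hΔ.map_neg]
    match_scalars <;> simp [Complex.ext_iff]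
  have sa {x : A} (hx : IsSelfAdjoint x) : IsSelfAdjoint (Δ x) := hΔ.isSelfAdjoint_apply h𝒟 hx
  simpa only [realPart_add_I_smul (sa (hs.add ht)) (sa (hs.sub ht)),
    realPart_add_I_smul ((sa hs).add (sa ht)) ((sa hs).sub (sa ht))]
    using congrArg (fun z ↦ (ℜ z : A)) key

theorem apply_eq_realPart_add_I_smul_imaginaryPart (z : A) :
    Δ z = Δ (ℜ z) + I • Δ (ℑ z) := by
  conv_lhs => rw [← realPart_add_I_smul_imaginaryPart z]
  exact hΔ.map_add_I_smul h𝒟 (ℜ z).2 (ℑ z).2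

theorem map_add (z w : A) : Δ (z + w) = Δ z + Δ w := by
  rw [hΔ.apply_eq_realPart_add_I_smul_imaginaryPart h𝒟 (z + w), _root_.map_add, _root_.map_add]
  push_cast
  rw [hΔ.map_add_of_isSelfAdjoint h𝒟 (ℜ z).2 (ℜ w).2,
    hΔ.map_add_of_isSelfAdjoint h𝒟 (ℑ z).2 (ℑ w).2,
    hΔ.apply_eq_realPart_add_I_smul_imaginaryPart h𝒟 z,
    hΔ.apply_eq_realPart_add_I_smul_imaginaryPart h𝒟 w]
  module

end IsWeak2Local

open Metric in
theorem TotallyBounded.image_of_controlled {α β γ : Type*} [PseudoMetricSpace β]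
    [PseudoMetricSpace γ] {f : α → β} {g : α → γ} {s : Set α} (hg : TotallyBounded (g '' s))
    (hfg : ∀ ε > 0, ∃ δ > 0, ∀ x ∈ s, ∀ y ∈ s, dist (g x) (g y) < δ → dist (f x) (f y) < ε) :
    TotallyBounded (f '' s) := by
  rw [totallyBounded_iff]
  intro ε hε
  obtain ⟨δ, hδ, hδε⟩ := hfg ε hε
  obtain ⟨t, hts, htfin, hcover⟩ :=
    Set.exists_subset_image_finite_and.1 (finite_approx_of_totallyBounded hg δ hδ)
  refine ⟨f '' t, htfin.image f, ?_⟩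
  rintro _ ⟨x, hx, rfl⟩
  obtain ⟨_, ⟨y, hy, rfl⟩, hxy⟩ := Set.mem_iUnion₂.1 (hcover ⟨x, hx, rfl⟩)
  exact Set.mem_biUnion (Set.mem_image_of_mem f hy) (hδε x hx y (hts hy) hxy)

open scoped InnerProductSpace in
theorem ContinuousLinearMap.norm_adjoint_apply_sq_le {𝕜 E F : Type*} [RCLike 𝕜]
    [NormedAddCommGroup E] [InnerProductSpace 𝕜 E] [CompleteSpace E]
    [NormedAddCommGroup F] [InnerProductSpace 𝕜 F] [CompleteSpace F] (T : E →L[𝕜] F) (y : F) :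
    ‖adjoint T y‖ ^ 2 ≤ ‖y‖ * ‖T (adjoint T y)‖ := by
  rw [(adjoint T).apply_norm_sq_eq_inner_adjoint_right, adjoint_adjoint]
  exact (RCLike.re_le_norm _).trans (norm_inner_le_norm _ _)

open Metric in
-- `‖T† y‖ ^ 2 ≤ ‖y‖ ‖T T† y‖` lets total boundedness pass from `T T† (ball)` to `T† (ball)`.
theorem IsCompactOperator.adjoint {𝕜 E F : Type*} [RCLike 𝕜]
    [NormedAddCommGroup E] [InnerProductSpace 𝕜 E] [CompleteSpace E]
    [NormedAddCommGroup F] [InnerProductSpace 𝕜 F] [CompleteSpace F] {T : E →L[𝕜] F}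
    (hT : IsCompactOperator T) : IsCompactOperator (ContinuousLinearMap.adjoint T) := by
  set A := ContinuousLinearMap.adjoint T
  have hTA : TotallyBounded ((T ∘L A) '' closedBall 0 1) :=
    ((hT.comp_clm A).isCompact_closure_image_closedBall 1).totallyBounded.subset subset_closure
  have hA : TotallyBounded (A '' closedBall 0 1) := by
    refine hTA.image_of_controlled fun ε hε ↦ ⟨ε ^ 2 / 2, by positivity, fun x hx y hy hxy ↦ ?_⟩
    have hxy2 : ‖x - y‖ ≤ 2 := by
      have := norm_sub_le x y
      rw [mem_closedBall_zero_iff] at hx hy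
      linarith
    have := T.norm_adjoint_apply_sq_le (x - y)
    rw [dist_eq_norm] at hxy ⊢
    simp only [map_sub, ContinuousLinearMap.comp_apply] at this hxy
    nlinarith [norm_nonneg (A x - A y), norm_nonneg (T (A x) - T (A y))]
  exact (isCompactOperator_iff_isCompact_closure_image_closedBall A.toLinearMap one_pos).2
    (hA.closure.isCompact_of_isClosed isClosed_closure)

namespace compactOps

variable {H}

instance : SeparatingDual ℂ (compactOps H) := by
  let : NormedSpace ℂ (compactOps H) := SubmoduleClass.toNormedSpace (compactOps H)
  infer_instance

noncomputable instance : Star (compactOps H) where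
  star T := ⟨star (T : H →L[ℂ] H), by
    change IsCompactOperator ⇑(star (T : H →L[ℂ] H))
    rw [ContinuousLinearMap.star_eq_adjoint]
    exact IsCompactOperator.adjoint T.2⟩

noncomputable instance : StarAddMonoid (compactOps H) where
  star_involutive T := Subtype.ext (star_star (T : H →L[ℂ] H))
  star_add S T := Subtype.ext (star_add (S : H →L[ℂ] H) T)

instance : StarModule ℂ (compactOps H) where
  star_smul c T := Subtype.ext (star_smul c (T : H →L[ℂ] H))

instance : ContinuousStar (compactOps H) where
  continuous_star := (continuous_star.comp continuous_subtype_val).subtype_mk _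

end compactOps

variable {H} in
theorem IsWeak2LocalStarDerivation.isWeak2Local {Δ : compactOps H → compactOps H}
    (hΔ : IsWeak2LocalStarDerivation Δ) :
    IsWeak2Local {D : compactOps H →L[ℂ] compactOps H | ∀ x, D (star x) = star (D x)} Δ := by
  intro a b φ
  obtain ⟨D, -, hD, h⟩ := hΔ a b φ
  exact ⟨D, fun x ↦ Subtype.ext (hD x (star x) rfl), h⟩

/-- Every weak-2-local `*`-derivation `Δ` on `K(H)` is a quasi-linear operator: it is
linear on the C*-subalgebra `K(H)_x` generated by any self-adjoint `x`, and
`Δ(a + i b) = Δ(a) + i Δ(b)` for self-adjoint `a, b`. -/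
theorem weak2local_star_derivation_is_quasilinear
    (Δ : compactOps H → compactOps H) (hΔ : IsWeak2LocalStarDerivation Δ) :
    (∀ x : compactOps H, IsSelfAdjoint ((x : H →L[ℂ] H)) →
      ∀ b ∈ (NonUnitalAlgebra.adjoin ℂ ({x} : Set (compactOps H))).topologicalClosure,
      ∀ c ∈ (NonUnitalAlgebra.adjoin ℂ ({x} : Set (compactOps H))).topologicalClosure,
      ∀ α β : ℂ, Δ (α • b + β • c) = α • Δ b + β • Δ c) ∧
    (∀ a b : compactOps H, IsSelfAdjoint ((a : H →L[ℂ] H)) →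
      IsSelfAdjoint ((b : H →L[ℂ] H)) →
      Δ (a + Complex.I • b) = Δ a + Complex.I • Δ b) := by
  have hΔ' := hΔ.isWeak2Local
  refine ⟨fun _ _ b _ c _ α β ↦ ?_, fun a b ha hb ↦ ?_⟩
  · rw [hΔ'.map_add subset_rfl, hΔ'.map_smul, hΔ'.map_smul]
  · exact hΔ'.map_add_I_smul subset_rfl (Subtype.ext ha) (Subtype.ext hb)
end
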